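/- The flood polynomials of cycle graphs satisfy: F_{O_3}(x) = x³ + 3x², F_{O_4}(x) = x⁴ + 4x³ + 2x², and for n ≥ 5, F_{O_n}(x) = x·F_{O_{n-1}}(x) + x·F_{O_{n-2}}(x). -/

import Mathlib

open scoped Classical
open Polynomial

/-- One step of the cascade sequence: add all vertices having at least two
neighbors in the current set. -/
noncomputable def floodStep {V : Type*} (G : SimpleGraph V) [Fintype V]
    (C : Finset V) : Finset V :=
  C ∪ Finset.univ.filter (fun x => 2 ≤ (C.filter (fun y => G.Adj x y)).card)

/-- `C` completely floods `G`: the cascade sequence stabilizes to all of `V`.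
Since `floodStep` is inflationary, this is equivalent to some iterate being `univ`. -/
def Floods {V : Type*} (G : SimpleGraph V) [Fintype V] (C : Finset V) : Prop :=
  ∃ k, (floodStep G)^[k] C = Finset.univ

/-- The flood polynomial of `G`. -/
noncomputable def floodPoly {V : Type*} (G : SimpleGraph V) [Fintype V] :
    Polynomial ℕ :=
  ∑ C ∈ Finset.univ.filter (fun C : Finset V => Floods G C), Polynomial.X ^ C.card

/-- The degree of a vertex. -/
noncomputable def deg {V : Type*} (G : SimpleGraph V) [Fintype V] (v : V) : ℕ :=
  (Finset.univ.filter (fun y => G.Adj v y)).card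


/-!
In a 2-regular graph a set floods exactly when it is a vertex cover: a cover floods in one step,
since every vertex outside it has both neighbours inside, whereas the two ends of an uncovered
edge each have at most one other neighbour, so neither is ever added. Vertex covers of the
`n`-cycle, weighted by `X ^ #C`, are counted by the trace of `T ^ n` for the transfer matrix
`T = !![0, X; 1, X]`, and Cayley–Hamilton `T ^ 2 = X • T + X • 1` gives the recurrence.
-/

open Finset SimpleGraph

section Flooding

variable {V : Type*} {G : SimpleGraph V} [Fintype V] [DecidableRel G.Adj]

theorem mem_floodStep {C : Finset V} {x : V} :
    x ∈ floodStep G C ↔ x ∈ C ∨ 2 ≤ #(G.neighborFinset x ∩ C) := by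
  rw [floodStep, mem_union, mem_filter, neighborFinset_eq_filter, filter_inter, univ_inter]
  simp only [mem_univ, true_and]
  -- the two filters differ only in their `Decidable` instances
  convert Iff.rfl

theorem floodStep_eq_univ_of_isVertexCover (hdeg : ∀ v, 2 ≤ G.degree v) {C : Finset V}
    (hC : G.IsVertexCover C) : floodStep G C = univ := by
  refine eq_univ_of_forall fun x => mem_floodStep.2 (or_iff_not_imp_left.2 fun hx => ?_)
  have hnbrs : G.neighborFinset x ⊆ C := fun y hy =>
    (hC ((mem_neighborFinset G x y).1 hy)).resolve_left hx
  rw [inter_eq_left.2 hnbrs, card_neighborFinset_eq_degree]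
  exact hdeg x

theorem notMem_floodStep_of_adj {C : Finset V} {x y : V} (hdeg : G.degree x ≤ 2)
    (hxy : G.Adj x y) (hx : x ∉ C) (hy : y ∉ C) : x ∉ floodStep G C := by
  have hsub : G.neighborFinset x ∩ C ⊆ (G.neighborFinset x).erase y := fun z hz => by
    obtain ⟨hxz, hzC⟩ := mem_inter.1 hz
    exact mem_erase.2 ⟨fun hzy => hy (hzy ▸ hzC), hxz⟩
  have hcard := card_le_card hsub
  rw [card_erase_of_mem ((mem_neighborFinset G x y).2 hxy), card_neighborFinset_eq_degree] at hcard
  rw [mem_floodStep, not_or]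
  exact ⟨hx, by omega⟩

theorem floods_iff_isVertexCover (hG : G.IsRegularOfDegree 2) {C : Finset V} :
    Floods G C ↔ G.IsVertexCover C := by
  refine ⟨fun ⟨k, hk⟩ => ?_,
    fun hC => ⟨1, floodStep_eq_univ_of_isVertexCover (fun v => (hG v).ge) hC⟩⟩
  by_contra hC
  obtain ⟨x, y, hxy, hx, hy⟩ : ∃ x y, G.Adj x y ∧ x ∉ C ∧ y ∉ C := by
    simpa [IsVertexCover] using hC
  have hpersist : ∀ j, x ∉ (floodStep G)^[j] C ∧ y ∉ (floodStep G)^[j] C := by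
    intro j
    induction j with
    | zero => exact ⟨hx, hy⟩
    | succ j ih =>
      rw [Function.iterate_succ_apply']
      exact ⟨notMem_floodStep_of_adj (hG x).le hxy ih.1 ih.2,
        notMem_floodStep_of_adj (hG y).le hxy.symm ih.2 ih.1⟩
  exact (hpersist k).1 (hk ▸ mem_univ x)

theorem floodPoly_eq_sum_isVertexCover (hG : G.IsRegularOfDegree 2) :
    floodPoly G =
      ∑ C ∈ univ.filter (fun C : Finset V => G.IsVertexCover (C : Set V)), X ^ #C := by
  rw [floodPoly]
  exact sum_congr (filter_congr fun C _ => floods_iff_isVertexCover hG) fun _ _ => rfl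

end Flooding

theorem isVertexCover_cycleGraph_iff {n : ℕ} {C : Set (Fin (n + 2))} :
    (cycleGraph (n + 2)).IsVertexCover C ↔ ∀ i, i ∈ C ∨ i + 1 ∈ C := by
  refine ⟨fun hC i => hC (cycleGraph_adj.2 (Or.inr (add_sub_cancel_left i 1))),
    fun hC u v huv => ?_⟩
  rcases cycleGraph_adj.1 huv with h | h
  · rw [sub_eq_iff_eq_add'] at h
    exact (h ▸ hC v).symm
  · rw [sub_eq_iff_eq_add'] at h
    exact h ▸ hC u

namespace Fin

theorem cons_apply_add_one {n : ℕ} {β : Type*} (a : β) (s : Fin n → β) (i : Fin (n + 1)) :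
    Fin.cons (α := fun _ => β) a s (i + 1) = Fin.snoc (α := fun _ => β) s a i := by
  induction i using Fin.lastCases with
  | last => simp
  | cast j => simp [Fin.coeSucc_eq_succ]

end Fin

namespace Matrix

variable {ι R : Type*} [Fintype ι] [DecidableEq ι] [CommSemiring R]

theorem pow_succ_apply_eq_sum_prod (A : Matrix ι ι R) (n : ℕ) (a b : ι) :
    (A ^ (n + 1)) a b =
      ∑ s : Fin n → ι,
        ∏ i, A (Fin.cons (α := fun _ => ι) a s i) (Fin.snoc (α := fun _ => ι) s b i) := by
  induction n generalizing a with
  | zero => simp [Fin.snoc]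
  | succ n ih =>
    rw [pow_succ', mul_apply, ← Fintype.sum_equiv (Fin.consEquiv fun _ => ι) _ _ (fun _ => rfl),
      Fintype.sum_prod_type]
    refine sum_congr rfl fun c _ => ?_
    rw [ih, mul_sum]
    refine sum_congr rfl fun s _ => ?_
    show _ = ∏ i, A (Fin.cons (α := fun _ => ι) a (Fin.cons c s) i)
      (Fin.snoc (α := fun _ => ι) (Fin.cons c s) b i)
    rw [← Fin.cons_snoc_eq_snoc_cons, Fin.prod_univ_succ (n := n + 1)]
    simp only [Fin.cons_zero, Fin.cons_succ]

theorem trace_pow_succ_eq_sum_prod (A : Matrix ι ι R) (n : ℕ) :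
    trace (A ^ (n + 1)) = ∑ v : Fin (n + 1) → ι, ∏ i, A (v i) (v (i + 1)) := by
  rw [← Fintype.sum_equiv (Fin.consEquiv fun _ => ι) _ _ (fun _ => rfl), Fintype.sum_prod_type]
  simp only [trace, diag, pow_succ_apply_eq_sum_prod, Fin.consEquiv_apply, Fin.cons_apply_add_one]

end Matrix

/-- `coverTransfer a b` weighs a vertex in state `b` that follows one in state `a`, where `true`
means "in the cover". -/
noncomputable def coverTransfer : Matrix Bool Bool ℕ[X] :=
  Matrix.of fun a b => if a || b then (if b then X else 1) else 0

theorem coverTransfer_sq :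
    coverTransfer ^ 2 = (X : ℕ[X]) • coverTransfer + (X : ℕ[X]) • 1 := by
  ext a b
  cases a <;> cases b <;> simp [sq, Matrix.mul_apply, coverTransfer]

theorem trace_coverTransfer_pow_add_two (k : ℕ) :
    Matrix.trace (coverTransfer ^ (k + 2)) =
      X * Matrix.trace (coverTransfer ^ (k + 1)) + X * Matrix.trace (coverTransfer ^ k) := by
  rw [pow_add, coverTransfer_sq, mul_add, Matrix.mul_smul, Matrix.mul_smul, ← pow_succ,
    Matrix.mul_one, Matrix.trace_add, Matrix.trace_smul, Matrix.trace_smul, smul_eq_mul,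
    smul_eq_mul]

theorem trace_coverTransfer : Matrix.trace coverTransfer = X := by
  simp [Matrix.trace, coverTransfer]

theorem prod_coverTransfer_decide_mem {n : ℕ} (C : Finset (Fin (n + 1))) :
    ∏ i, coverTransfer (decide (i ∈ C)) (decide (i + 1 ∈ C)) =
      if ∀ i, i ∈ C ∨ i + 1 ∈ C then X ^ #C else 0 := by
  simp only [coverTransfer, Matrix.of_apply, Bool.or_eq_true, decide_eq_true_eq,
    Fintype.prod_ite_zero]
  congr 1
  rw [Fintype.prod_equiv (Equiv.addRight 1) (fun i => if i + 1 ∈ C then X else 1)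
      (fun i => if i ∈ C then X else 1) fun _ => rfl,
    Fintype.prod_ite_mem, prod_const]

theorem sum_cyclicCover_eq_trace (n : ℕ) :
    ∑ C ∈ univ.filter (fun C : Finset (Fin (n + 1)) => ∀ i, i ∈ C ∨ i + 1 ∈ C), X ^ #C =
      Matrix.trace (coverTransfer ^ (n + 1)) := by
  have hbij : Function.Bijective fun (C : Finset (Fin (n + 1))) i => decide (i ∈ C) := by
    refine ⟨fun C D h => ?_, fun s => ⟨univ.filter fun i => s i, by ext; simp⟩⟩
    ext i
    simpa using congrFun h i
  rw [Matrix.trace_pow_succ_eq_sum_prod, ← Fintype.sum_bijective _ hbij _ _ fun _ => rfl,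
    sum_filter]
  exact sum_congr rfl fun C _ => (prod_coverTransfer_decide_mem C).symm

theorem floodPoly_cycleGraph_eq_trace (n : ℕ) :
    floodPoly (cycleGraph (n + 3)) = Matrix.trace (coverTransfer ^ (n + 3)) := by
  have hreg : (cycleGraph (n + 3)).IsRegularOfDegree 2 := fun _ => cycleGraph_degree_three_le
  rw [floodPoly_eq_sum_isVertexCover hreg, ← sum_cyclicCover_eq_trace]
  exact sum_congr (filter_congr fun C _ => isVertexCover_cycleGraph_iff) fun _ _ => rfl

theorem floodPoly_cycle_recurrence :
    floodPoly (SimpleGraph.cycleGraph 3) =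
      Polynomial.X ^ 3 + 3 * Polynomial.X ^ 2 ∧
    floodPoly (SimpleGraph.cycleGraph 4) =
      Polynomial.X ^ 4 + 4 * Polynomial.X ^ 3 + 2 * Polynomial.X ^ 2 ∧
    ∀ n : ℕ, 5 ≤ n →
      floodPoly (SimpleGraph.cycleGraph n) =
        Polynomial.X * floodPoly (SimpleGraph.cycleGraph (n - 1)) +
          Polynomial.X * floodPoly (SimpleGraph.cycleGraph (n - 2)) := by
  have h0 : Matrix.trace (coverTransfer ^ 0) = 2 := by simp
  have h1 : Matrix.trace (coverTransfer ^ 1) = X := by rw [pow_one, trace_coverTransfer]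
  refine ⟨?_, ?_, fun n hn => ?_⟩
  · rw [floodPoly_cycleGraph_eq_trace 0]
    simp only [trace_coverTransfer_pow_add_two, h0, h1]
    ring
  · rw [floodPoly_cycleGraph_eq_trace 1]
    simp only [trace_coverTransfer_pow_add_two, h0, h1]
    ring
  · obtain ⟨k, rfl⟩ : ∃ k, n = k + 5 := ⟨n - 5, by omega⟩
    show floodPoly (cycleGraph (k + 2 + 3)) =
      X * floodPoly (cycleGraph (k + 1 + 3)) + X * floodPoly (cycleGraph (k + 3))
    simp only [floodPoly_cycleGraph_eq_trace]
    exact trace_coverTransfer_pow_add_two (k + 3)
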